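/- Assume d^* < ∞ and that there is a constant C₂ > 0 with d_j^− = d_{k_{j−1}+1} + ⋯ + d_{k_j} ≤ C₂ · min{d_{k_{j−1}+1}, d_{k_j}} for all j. Then the form t_{X,β} is lower semibounded (i.e., there exists C ≥ 0 with t_{X,β}[f] ≥ −C ∫₀^∞|f|² dx for all f in its domain) if and only if there exists a constant C' ≥ 0 such that 1/|β_{k_j}| ≤ C' · min{d_j^−, d_{j+1}^−} for all j. -/

import Mathlib

open MeasureTheory Set Filter

noncomputable section

/-- A function that is *piecewise `H¹`* with respect to the partition points
`x 0 < x 1 < x 2 < ⋯` of `[0,∞)`: on each interval `Δ_{k+1} = [x k, x (k+1)]` it is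
absolutely continuous with derivative `f' ∈ L²`, encoded via the fundamental
theorem of calculus; `fr k = f(x k +)` and `fl (k+1) = f(x (k+1) −)` are the
one-sided limits at the nodes. -/
structure PW1 (x : ℕ → ℝ) where
  f : ℝ → ℝ
  f' : ℝ → ℝ
  fr : ℕ → ℝ
  fl : ℕ → ℝ
  int_d : ∀ k, IntegrableOn f' (Icc (x k) (x (k + 1))) volume
  sq_d : ∀ k, IntegrableOn (fun t => f' t ^ 2) (Icc (x k) (x (k + 1))) volume
  ftc : ∀ k, ∀ t ∈ Ioo (x k) (x (k + 1)), f t = fr k + ∫ s in Ioc (x k) t, f' s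
  fl_eq : ∀ k, fl (k + 1) = fr k + ∫ s in Ioc (x k) (x (k + 1)), f' s

/-- The jump `f(x_{k+1}+) − f(x_{k+1}−)` of a piecewise `H¹` function at the
interior node `x (k+1)` (the paper's node `x_{k+1}`). -/
def PW1.jump {x : ℕ → ℝ} (F : PW1 x) (k : ℕ) : ℝ := F.fr (k + 1) - F.fl (k + 1)

/-- Membership in the domain of the form `t_{X,β,q}`: `f ∈ L²(0,∞)`,
`∫₀^∞ |f'|² < ∞`, `∫₀^∞ |q| |f|² < ∞` and `Σ_k |f(x_k+) − f(x_k−)|²/|β_k| < ∞`. -/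
def MemDom (x : ℕ → ℝ) (q : ℝ → ℝ) (β : ℕ → ℝ) (F : PW1 x) : Prop :=
  IntegrableOn (fun t => F.f t ^ 2) (Ioi 0) volume ∧
  IntegrableOn (fun t => F.f' t ^ 2) (Ioi 0) volume ∧
  IntegrableOn (fun t => |q t| * F.f t ^ 2) (Ioi 0) volume ∧
  Summable (fun k => F.jump k ^ 2 / |β (k + 1)|)

/-- The value of the quadratic form
`t_{X,β,q}[f] = ∫₀^∞ (|f'|² + q |f|²) dx + Σ_k |f(x_k+) − f(x_k−)|²/β_k`. -/
def formVal (x : ℕ → ℝ) (q : ℝ → ℝ) (β : ℕ → ℝ) (F : PW1 x) : ℝ :=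
  (∫ t in Ioi (0 : ℝ), (F.f' t ^ 2 + q t * F.f t ^ 2)) +
    ∑' k, F.jump k ^ 2 / β (k + 1)


/-- `dminus x κ j` is the paper's `d_{j+1}^- = x_{k_{j+1}} − x_{k_j}` (with `k_0 = 0`),
the distance between the consecutive nodes `x_{k_j}` supporting negative
intensities; `κ j` is the paper's index `k_{j+1}`. -/
def dminus (x : ℕ → ℝ) (κ : ℕ → ℕ) : ℕ → ℝ
  | 0 => x (κ 0) - x 0
  | j + 1 => x (κ (j + 1)) - x (κ j)

/-- `kprev κ j` is the paper's `k_j` when `κ j` is the paper's `k_{j+1}`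
(so `kprev κ 0 = k_0 = 0`). -/
def kprev (κ : ℕ → ℕ) : ℕ → ℕ
  | 0 => 0
  | j + 1 => κ j

/-!
Necessity: the indicator of `(x_{k_{j-1}}, x_{k_j})` is constant between nodes, so its form
value is the sum of `1/β` over its endpoints other than `x_0`, all negative, while its squared
`L²` norm is `d_j^-`. A lower bound `-C ‖f‖²` therefore gives `1/|β_{k_j}| ≤ C d_j^-` and
`1/|β_{k_j}| ≤ C d_{j+1}^-`.

Sufficiency: the geometric condition turns the hypothesis into
`1/|β_k| ≤ C' C₂ min (d_k, d_{k+1})` at every node with `β_k < 0`. On an interval of length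
`d`, averaging `|f(x_k±)|² ≤ 2|f t|² + 2|∫ f'|²` over a subinterval of length `θ d` and applying
Cauchy–Schwarz gives `d |f(x_k±)|² ≤ (2/θ) ∫ |f|² + 2 θ d² ∫ |f'|²`. With `d ≤ d^*` and `θ` small,
the negative jump terms are absorbed by `∫ |f'|²` plus a multiple of `∫ |f|²`.
-/

theorem sq_setIntegral_le_measureReal_mul {X : Type*} [MeasurableSpace X] {μ : Measure X}
    {s : Set X} (hs : μ s ≠ ⊤) {h : X → ℝ}
    (hint : IntegrableOn h s μ) (hsq : IntegrableOn (fun t => h t ^ 2) s μ) :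
    (∫ t in s, h t ∂μ) ^ 2 ≤ μ.real s * ∫ t in s, h t ^ 2 ∂μ := by
  rcases eq_or_ne (μ s) 0 with h0 | h0
  · simp [Measure.restrict_eq_zero.2 h0]
  have hm : 0 < μ.real s := ENNReal.toReal_pos h0 hs
  have jensen := (even_two.convexOn_pow (𝕜 := ℝ)).map_set_average_le
    (continuous_pow 2).continuousOn isClosed_univ h0 hs (by simp) hint hsq
  simp only [setAverage_eq, smul_eq_mul, mul_pow] at jensen
  rw [← mul_le_mul_iff_of_pos_left (pow_pos hm 2)] at jensen
  field_simp at jensen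
  nlinarith [jensen]

theorem sq_setIntegral_Ioc_le {a b s t : ℝ} (has : a ≤ s) (hst : s ≤ t) (htb : t ≤ b)
    {h : ℝ → ℝ} (hint : IntegrableOn h (Ioc a b))
    (hsq : IntegrableOn (fun u => h u ^ 2) (Ioc a b)) :
    (∫ u in Ioc s t, h u) ^ 2 ≤ (t - s) * ∫ u in Ioc a b, h u ^ 2 := by
  have hsub : Ioc s t ⊆ Ioc a b := Ioc_subset_Ioc has htb
  calc (∫ u in Ioc s t, h u) ^ 2
      ≤ volume.real (Ioc s t) * ∫ u in Ioc s t, h u ^ 2 :=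
        sq_setIntegral_le_measureReal_mul measure_Ioc_lt_top.ne (hint.mono_set hsub)
          (hsq.mono_set hsub)
    _ ≤ (t - s) * ∫ u in Ioc a b, h u ^ 2 := by
        rw [Real.volume_real_Ioc_of_le hst]
        gcongr
        exact ae_of_all _ fun u => sq_nonneg _

theorem mul_le_two_mul_setIntegral_sq_add {f : ℝ → ℝ} {a b p ℓ v e : ℝ} (hℓ : 0 < ℓ)
    (hsub : Ioo p (p + ℓ) ⊆ Ioc a b) (hf : IntegrableOn (fun t => f t ^ 2) (Ioc a b))
    (hv : ∀ t ∈ Ioo p (p + ℓ), v ≤ 2 * f t ^ 2 + e) :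
    ℓ * v ≤ 2 * (∫ t in Ioc a b, f t ^ 2) + ℓ * e := by
  have hfW : IntegrableOn (fun t => f t ^ 2) (Ioo p (p + ℓ)) := hf.mono_set hsub
  have hvol : volume.real (Ioo p (p + ℓ)) = ℓ := by
    rw [Real.volume_real_Ioo_of_le (by linarith)]; ring
  have havg := setIntegral_ge_of_const_le_real measurableSet_Ioo measure_Ioo_lt_top.ne hv
    ((hfW.const_mul 2).add (integrableOn_const measure_Ioo_lt_top.ne))
  rw [integral_add (hfW.const_mul 2) (integrableOn_const measure_Ioo_lt_top.ne),
    integral_const_mul, setIntegral_const, hvol, smul_eq_mul] at havg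
  have hmono : ∫ t in Ioo p (p + ℓ), f t ^ 2 ≤ ∫ t in Ioc a b, f t ^ 2 :=
    setIntegral_mono_set hf (ae_of_all _ fun t => sq_nonneg _) hsub.eventuallyLE
  linarith

theorem sum_setIntegral_Ioc_le {x : ℕ → ℝ} (hx : Monotone x) {a : ℝ} (ha : a ≤ x 0)
    {g : ℝ → ℝ} (hg : 0 ≤ g) (hint : IntegrableOn g (Ioi a)) (S : Finset ℕ) :
    ∑ k ∈ S, ∫ t in Ioc (x k) (x (k + 1)), g t ≤ ∫ t in Ioi a, g t := by
  have hsub : ∀ k, Ioc (x k) (x (k + 1)) ⊆ Ioi a :=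
    fun k _ ht => (ha.trans (hx (Nat.zero_le k))).trans_lt ht.1
  have hdisj : Pairwise (Function.onFun Disjoint fun k => Ioc (x k) (x (k + 1))) :=
    hx.pairwise_disjoint_on_Ioc_succ
  rw [← integral_biUnion_finset S (fun k _ => measurableSet_Ioc) (fun i _ j _ hij => hdisj hij)
    (fun k _ => hint.mono_set (hsub k))]
  exact setIntegral_mono_set hint (ae_of_all _ hg) (iUnion₂_subset fun k _ => hsub k).eventuallyLE

theorem tsum_le_two_mul_of_le_add_succ {u Q : ℕ → ℝ} {M : ℝ} (hu : Summable u)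
    (huQ : ∀ k, u k ≤ Q k + Q (k + 1)) (hQ : ∀ S : Finset ℕ, ∑ k ∈ S, Q k ≤ M) :
    ∑' k, u k ≤ 2 * M :=
  hu.tsum_le_of_sum_le fun S =>
    calc ∑ k ∈ S, u k ≤ ∑ k ∈ S, (Q k + Q (k + 1)) := Finset.sum_le_sum fun k _ => huQ k
      _ = ∑ k ∈ S, Q k + ∑ k ∈ S.map (addRightEmbedding 1), Q k := by
        rw [Finset.sum_add_distrib, Finset.sum_map]; rfl
      _ ≤ 2 * M := by linarith [hQ S, hQ (S.map (addRightEmbedding 1))]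

theorem Summable.negPart_of_abs {a : ℕ → ℝ} (h : Summable fun k => |a k|) :
    Summable fun k => (a k)⁻ :=
  h.of_nonneg_of_le (fun _ => negPart_nonneg _) fun _ => sup_le (neg_le_abs _) (abs_nonneg _)

theorem hasSum_ite_succ_eq (n : ℕ) (c : ℝ) :
    HasSum (fun k => if k + 1 = n then c else 0) (if n = 0 then 0 else c) := by
  cases n with
  | zero => simp [hasSum_zero]
  | succ m => simpa using hasSum_ite_eq m c

theorem mul_le_of_gap_mul_le {w c d D θ v m e : ℝ} (hc : 0 ≤ c) (hw : w ≤ c * d) (hd : 0 < d)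
    (hdD : d ≤ D) (hθ : 0 < θ) (hv : 0 ≤ v) (he : 0 ≤ e)
    (h : d * v ≤ 2 / θ * m + 2 * θ * d ^ 2 * e) :
    w * v ≤ 2 * c / θ * m + 2 * c * θ * D ^ 2 * e :=
  calc w * v ≤ c * (d * v) := by rw [← mul_assoc]; exact mul_le_mul_of_nonneg_right hw hv
    _ ≤ c * (2 / θ * m + 2 * θ * d ^ 2 * e) := mul_le_mul_of_nonneg_left h hc
    _ = 2 * c / θ * m + 2 * c * θ * d ^ 2 * e := by ring
    _ ≤ 2 * c / θ * m + 2 * c * θ * D ^ 2 * e := by gcongr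

namespace PW1

variable {x : ℕ → ℝ}

def massOn (F : PW1 x) (k : ℕ) : ℝ := ∫ t in Ioc (x k) (x (k + 1)), F.f t ^ 2

def energyOn (F : PW1 x) (k : ℕ) : ℝ := ∫ t in Ioc (x k) (x (k + 1)), F.f' t ^ 2

theorem massOn_nonneg (F : PW1 x) (k : ℕ) : 0 ≤ F.massOn k :=
  setIntegral_nonneg measurableSet_Ioc fun _ _ => sq_nonneg _

theorem energyOn_nonneg (F : PW1 x) (k : ℕ) : 0 ≤ F.energyOn k :=
  setIntegral_nonneg measurableSet_Ioc fun _ _ => sq_nonneg _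

theorem sq_integral_deriv_le (F : PW1 x) (k : ℕ) {s t : ℝ} (hs : x k ≤ s) (hst : s ≤ t)
    (ht : t ≤ x (k + 1)) : (∫ u in Ioc s t, F.f' u) ^ 2 ≤ (t - s) * F.energyOn k :=
  sq_setIntegral_Ioc_le hs hst ht ((F.int_d k).mono_set Ioc_subset_Icc_self)
    ((F.sq_d k).mono_set Ioc_subset_Icc_self)

theorem fl_eq_f_add (F : PW1 x) (k : ℕ) {t : ℝ} (ht : t ∈ Ioo (x k) (x (k + 1))) :
    F.fl (k + 1) = F.f t + ∫ u in Ioc t (x (k + 1)), F.f' u := by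
  have hint := (F.int_d k).mono_set Ioc_subset_Icc_self
  rw [F.fl_eq, F.ftc k t ht, add_assoc, ← setIntegral_union (Ioc_disjoint_Ioc_of_le le_rfl)
    measurableSet_Ioc (hint.mono_set (Ioc_subset_Ioc le_rfl ht.2.le))
    (hint.mono_set (Ioc_subset_Ioc ht.1.le le_rfl)), Ioc_union_Ioc_eq_Ioc ht.1.le ht.2.le]

theorem gap_mul_sq_le_of_forall (F : PW1 x) (k : ℕ) (hx : StrictMono x)
    (hf : IntegrableOn (fun t => F.f t ^ 2) (Ioc (x k) (x (k + 1)))) {θ p v : ℝ}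
    (hθ : 0 < θ) (hsub : Ioo p (p + θ * (x (k + 1) - x k)) ⊆ Ioc (x k) (x (k + 1)))
    (hv : ∀ t ∈ Ioo p (p + θ * (x (k + 1) - x k)),
      v ≤ 2 * F.f t ^ 2 + 2 * (θ * (x (k + 1) - x k)) * F.energyOn k) :
    (x (k + 1) - x k) * v
      ≤ 2 / θ * F.massOn k + 2 * θ * (x (k + 1) - x k) ^ 2 * F.energyOn k := by
  have hd : 0 < x (k + 1) - x k := sub_pos.2 (hx (Nat.lt_succ_self k))
  have h := mul_le_two_mul_setIntegral_sq_add (mul_pos hθ hd) hsub hf hv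
  rw [← mul_le_mul_iff_of_pos_left hθ, massOn]
  field_simp
  nlinarith [h]

theorem gap_mul_fr_sq_le (F : PW1 x) (hx : StrictMono x) (k : ℕ)
    (hf : IntegrableOn (fun t => F.f t ^ 2) (Ioc (x k) (x (k + 1)))) {θ : ℝ} (hθ : 0 < θ)
    (hθ1 : θ ≤ 1) :
    (x (k + 1) - x k) * F.fr k ^ 2
      ≤ 2 / θ * F.massOn k + 2 * θ * (x (k + 1) - x k) ^ 2 * F.energyOn k := by
  have hθd : θ * (x (k + 1) - x k) ≤ x (k + 1) - x k :=
    mul_le_of_le_one_left (sub_pos.2 (hx (Nat.lt_succ_self k))).le hθ1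
  refine F.gap_mul_sq_le_of_forall k hx hf hθ (p := x k)
    (fun t ht => ⟨ht.1, by linarith [ht.2]⟩) fun t ht => ?_
  have htk : t ∈ Ioo (x k) (x (k + 1)) := ⟨ht.1, by linarith [ht.2]⟩
  have hJ : (∫ u in Ioc (x k) t, F.f' u) ^ 2 ≤ θ * (x (k + 1) - x k) * F.energyOn k :=
    (F.sq_integral_deriv_le k le_rfl htk.1.le htk.2.le).trans
      (mul_le_mul_of_nonneg_right (by linarith [ht.2]) (F.energyOn_nonneg k))
  rw [F.ftc k t htk]
  nlinarith [sq_nonneg (F.fr k + 2 * ∫ u in Ioc (x k) t, F.f' u)]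

theorem gap_mul_fl_sq_le (F : PW1 x) (hx : StrictMono x) (k : ℕ)
    (hf : IntegrableOn (fun t => F.f t ^ 2) (Ioc (x k) (x (k + 1)))) {θ : ℝ} (hθ : 0 < θ)
    (hθ1 : θ ≤ 1) :
    (x (k + 1) - x k) * F.fl (k + 1) ^ 2
      ≤ 2 / θ * F.massOn k + 2 * θ * (x (k + 1) - x k) ^ 2 * F.energyOn k := by
  have hθd : θ * (x (k + 1) - x k) ≤ x (k + 1) - x k :=
    mul_le_of_le_one_left (sub_pos.2 (hx (Nat.lt_succ_self k))).le hθ1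
  refine F.gap_mul_sq_le_of_forall k hx hf hθ (p := x (k + 1) - θ * (x (k + 1) - x k))
    (fun t ht => ⟨by linarith [ht.1], by linarith [ht.2]⟩) fun t ht => ?_
  have htk : t ∈ Ioo (x k) (x (k + 1)) := ⟨by linarith [ht.1], by linarith [ht.2]⟩
  have hJ : (∫ u in Ioc t (x (k + 1)), F.f' u) ^ 2 ≤ θ * (x (k + 1) - x k) * F.energyOn k :=
    (F.sq_integral_deriv_le k htk.1.le htk.2.le le_rfl).trans
      (mul_le_mul_of_nonneg_right (by linarith [ht.1]) (F.energyOn_nonneg k))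
  rw [F.fl_eq_f_add k htk]
  nlinarith [sq_nonneg (F.f t - ∫ u in Ioc t (x (k + 1)), F.f' u)]

theorem mul_jump_sq_le (F : PW1 x) (hx : StrictMono x)
    (hf : ∀ k, IntegrableOn (fun t => F.f t ^ 2) (Ioc (x k) (x (k + 1)))) {D : ℝ}
    (hD : ∀ k, x (k + 1) - x k ≤ D) {k : ℕ} {w c θ : ℝ} (hc : 0 ≤ c) (hw : 0 ≤ w)
    (hwl : w ≤ c * (x (k + 1) - x k)) (hwr : w ≤ c * (x (k + 2) - x (k + 1)))
    (hθ : 0 < θ) (hθ1 : θ ≤ 1) :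
    w * F.jump k ^ 2 ≤ 4 * c / θ * (F.massOn k + F.massOn (k + 1))
      + 4 * c * θ * D ^ 2 * (F.energyOn k + F.energyOn (k + 1)) := by
  have hgap : ∀ k, 0 < x (k + 1) - x k := fun k => sub_pos.2 (hx (Nat.lt_succ_self k))
  have hjump : F.jump k ^ 2 ≤ 2 * F.fl (k + 1) ^ 2 + 2 * F.fr (k + 1) ^ 2 := by
    rw [jump]; nlinarith [sq_nonneg (F.fr (k + 1) + F.fl (k + 1))]
  have hl := mul_le_of_gap_mul_le hc hwl (hgap k) (hD k) hθ (sq_nonneg _) (F.energyOn_nonneg k)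
    (F.gap_mul_fl_sq_le hx k (hf k) hθ hθ1)
  have hr := mul_le_of_gap_mul_le hc hwr (hgap (k + 1)) (hD (k + 1)) hθ (sq_nonneg _)
    (F.energyOn_nonneg (k + 1)) (F.gap_mul_fr_sq_le hx (k + 1) (hf (k + 1)) hθ hθ1)
  calc w * F.jump k ^ 2 ≤ w * (2 * F.fl (k + 1) ^ 2 + 2 * F.fr (k + 1) ^ 2) :=
        mul_le_mul_of_nonneg_left hjump hw
    _ = 2 * (w * F.fl (k + 1) ^ 2) + 2 * (w * F.fr (k + 1) ^ 2) := by ring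
    _ ≤ 2 * (2 * c / θ * F.massOn k + 2 * c * θ * D ^ 2 * F.energyOn k)
        + 2 * (2 * c / θ * F.massOn (k + 1) + 2 * c * θ * D ^ 2 * F.energyOn (k + 1)) := by
      gcongr
    _ = _ := by ring

theorem summable_abs_jump_sq_div (F : PW1 x) {β : ℕ → ℝ}
    (hF : Summable fun k => F.jump k ^ 2 / |β (k + 1)|) :
    Summable fun k => |F.jump k ^ 2 / β (k + 1)| := by
  simpa only [abs_div, abs_pow, sq_abs] using hF

theorem integral_deriv_sq_sub_tsum_negPart_le (F : PW1 x) {β : ℕ → ℝ}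
    (hF : Summable fun k => |F.jump k ^ 2 / β (k + 1)|) :
    (∫ t in Ioi 0, F.f' t ^ 2) - ∑' k, (F.jump k ^ 2 / β (k + 1))⁻
      ≤ formVal x (fun _ => 0) β F := by
  have hlow : -∑' k, (F.jump k ^ 2 / β (k + 1))⁻ ≤ ∑' k, F.jump k ^ 2 / β (k + 1) := by
    rw [← tsum_neg]
    exact hF.negPart_of_abs.neg.tsum_le_tsum (fun k => neg_le.1 (neg_le_negPart _)) hF.of_abs
  simp only [formVal, zero_mul, add_zero]
  linarith

theorem negPart_jump_sq_div_le (F : PW1 x) (hx : StrictMono x)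
    (hf : ∀ k, IntegrableOn (fun t => F.f t ^ 2) (Ioc (x k) (x (k + 1)))) {D : ℝ}
    (hD : ∀ k, x (k + 1) - x k ≤ D) {β : ℕ → ℝ} {c θ : ℝ} {k : ℕ} (hc : 0 ≤ c)
    (hβ : β (k + 1) < 0 →
      1 / |β (k + 1)| ≤ c * (x (k + 1) - x k) ∧ 1 / |β (k + 1)| ≤ c * (x (k + 2) - x (k + 1)))
    (hθ : 0 < θ) (hθ1 : θ ≤ 1) :
    (F.jump k ^ 2 / β (k + 1))⁻ ≤ 4 * c / θ * (F.massOn k + F.massOn (k + 1))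
      + 4 * c * θ * D ^ 2 * (F.energyOn k + F.energyOn (k + 1)) := by
  rcases le_or_gt 0 (F.jump k ^ 2 / β (k + 1)) with hpos | hneg
  · rw [negPart_of_nonneg hpos]
    exact add_nonneg
      (mul_nonneg (by positivity) (add_nonneg (F.massOn_nonneg _) (F.massOn_nonneg _)))
      (mul_nonneg (by positivity) (add_nonneg (F.energyOn_nonneg _) (F.energyOn_nonneg _)))
  have hβk : β (k + 1) < 0 := by
    by_contra h
    exact hneg.not_ge (div_nonneg (sq_nonneg _) (not_lt.1 h))
  have hw : (F.jump k ^ 2 / β (k + 1))⁻ = 1 / |β (k + 1)| * F.jump k ^ 2 := by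
    rw [negPart_of_nonpos hneg.le, abs_of_neg hβk]; ring
  rw [hw]
  exact F.mul_jump_sq_le hx hf hD hc (by positivity) (hβ hβk).1 (hβ hβk).2 hθ hθ1

def indicatorIoo (hx : StrictMono x) (a b : ℕ) : PW1 x where
  f := (Ioo (x a) (x b)).indicator 1
  f' := 0
  fr k := if a ≤ k ∧ k < b then 1 else 0
  fl k := if a < k ∧ k ≤ b then 1 else 0
  int_d _ := integrableOn_zero
  sq_d _ := by simp
  ftc k t ht := by
    have ha : x a < t ↔ a ≤ k :=
      ⟨fun h => Nat.lt_succ_iff.1 (hx.lt_iff_lt.1 (h.trans ht.2)),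
        fun h => (hx.monotone h).trans_lt ht.1⟩
    have hb : t < x b ↔ k < b :=
      ⟨fun h => hx.lt_iff_lt.1 (ht.1.trans h), fun h => ht.2.trans_le (hx.monotone h)⟩
    simp [indicator, ha, hb]
  fl_eq k := by
    simp only [Pi.zero_apply, integral_zero, add_zero]
    exact if_congr (by omega) rfl rfl

variable (hx : StrictMono x) {a b : ℕ}

@[simp]
theorem indicatorIoo_f' : (indicatorIoo hx a b).f' = 0 := rfl

theorem indicatorIoo_jump (hab : a < b) (k : ℕ) :
    (indicatorIoo hx a b).jump k = (if k + 1 = a then 1 else 0) - (if k + 1 = b then 1 else 0) := by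
  simp only [jump, indicatorIoo]
  split_ifs <;> first | omega | norm_num

-- The node `x 0` carries no jump term, hence the case `a = 0`.
theorem hasSum_indicatorIoo_jump_sq_div (hab : a < b) (γ : ℕ → ℝ) :
    HasSum (fun k => (indicatorIoo hx a b).jump k ^ 2 / γ (k + 1))
      ((if a = 0 then 0 else 1 / γ a) + 1 / γ b) := by
  have h := (hasSum_ite_succ_eq a (1 / γ a)).add (hasSum_ite_succ_eq b (1 / γ b))
  rw [if_neg (by omega : b ≠ 0)] at h
  convert h using 2 with k
  rw [indicatorIoo_jump hx hab]
  split_ifs <;> first | omega | simp_all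

theorem indicatorIoo_f_sq :
    (fun t => (indicatorIoo hx a b).f t ^ 2) = (Ioo (x a) (x b)).indicator 1 := by
  ext t
  by_cases ht : t ∈ Ioo (x a) (x b) <;> simp [indicatorIoo, ht]

theorem integral_indicatorIoo_sq (hx0 : 0 ≤ x 0) (hab : a ≤ b) :
    ∫ t in Ioi 0, (indicatorIoo hx a b).f t ^ 2 = x b - x a := by
  have hsub : Ioo (x a) (x b) ⊆ Ioi 0 :=
    fun _ ht => (hx0.trans (hx.monotone (Nat.zero_le a))).trans_lt ht.1
  rw [indicatorIoo_f_sq, setIntegral_indicator measurableSet_Ioo, inter_eq_right.2 hsub]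
  simp [Real.volume_real_Ioo_of_le (hx.monotone hab)]

theorem memDom_indicatorIoo (hab : a < b) (β : ℕ → ℝ) :
    MemDom x (fun _ => 0) β (indicatorIoo hx a b) := by
  refine ⟨?_, by simp, by simp, (hasSum_indicatorIoo_jump_sq_div hx hab fun k => |β k|).summable⟩
  rw [indicatorIoo_f_sq]
  exact ((integrableOn_const measure_Ioo_lt_top.ne).integrable_indicator
    measurableSet_Ioo).integrableOn

theorem formVal_indicatorIoo (hab : a < b) (β : ℕ → ℝ) :
    formVal x (fun _ => 0) β (indicatorIoo hx a b) = (if a = 0 then 0 else 1 / β a) + 1 / β b := by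
  rw [formVal, (hasSum_indicatorIoo_jump_sq_div hx hab β).tsum_eq]
  simp

end PW1

theorem PW1.tsum_negPart_jump_sq_div_le {x : ℕ → ℝ} (hx0 : 0 ≤ x 0) (hx : StrictMono x)
    {β : ℕ → ℝ} {c D θ : ℝ} (hc : 0 ≤ c) (hD : ∀ k, x (k + 1) - x k ≤ D)
    (hβ : ∀ k, β (k + 1) < 0 →
      1 / |β (k + 1)| ≤ c * (x (k + 1) - x k) ∧ 1 / |β (k + 1)| ≤ c * (x (k + 2) - x (k + 1)))
    (hθ : 0 < θ) (hθ1 : θ ≤ 1) (F : PW1 x) (hf : IntegrableOn (fun t => F.f t ^ 2) (Ioi 0))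
    (hf' : IntegrableOn (fun t => F.f' t ^ 2) (Ioi 0))
    (hsum : Summable fun k => |F.jump k ^ 2 / β (k + 1)|) :
    ∑' k, (F.jump k ^ 2 / β (k + 1))⁻ ≤ 2 * (4 * c / θ * (∫ t in Ioi 0, F.f t ^ 2)
      + 4 * c * θ * D ^ 2 * ∫ t in Ioi 0, F.f' t ^ 2) := by
  have hsub : ∀ k, Ioc (x k) (x (k + 1)) ⊆ Ioi 0 :=
    fun k _ ht => (hx0.trans (hx.monotone (Nat.zero_le k))).trans_lt ht.1
  refine tsum_le_two_mul_of_le_add_succ hsum.negPart_of_abs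
    (Q := fun k => 4 * c / θ * F.massOn k + 4 * c * θ * D ^ 2 * F.energyOn k)
    (fun k => (F.negPart_jump_sq_div_le hx (fun k => hf.mono_set (hsub k)) hD hc (hβ k) hθ
      hθ1).trans_eq (by ring)) fun S => ?_
  rw [Finset.sum_add_distrib, ← Finset.mul_sum, ← Finset.mul_sum]
  exact add_le_add
    (mul_le_mul_of_nonneg_left (sum_setIntegral_Ioc_le hx.monotone hx0
      (fun t => sq_nonneg (F.f t)) hf S) (by positivity))
    (mul_le_mul_of_nonneg_left (sum_setIntegral_Ioc_le hx.monotone hx0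
      (fun t => sq_nonneg (F.f' t)) hf' S) (by positivity))

theorem exists_formVal_ge_of_inv_abs_le_mul_gap {x : ℕ → ℝ} (hx0 : 0 ≤ x 0)
    (hx : StrictMono x) {β : ℕ → ℝ} {c D : ℝ} (hc : 0 ≤ c) (hD : ∀ k, x (k + 1) - x k ≤ D)
    (hβ : ∀ k, β (k + 1) < 0 →
      1 / |β (k + 1)| ≤ c * (x (k + 1) - x k) ∧ 1 / |β (k + 1)| ≤ c * (x (k + 2) - x (k + 1))) :
    ∃ C : ℝ, 0 ≤ C ∧ ∀ F : PW1 x, MemDom x (fun _ => 0) β F →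
      formVal x (fun _ => 0) β F ≥ -C * ∫ t in Ioi (0 : ℝ), F.f t ^ 2 := by
  set K := 8 * c * D ^ 2 + 1
  have hK : 1 ≤ K := by simp only [K]; nlinarith [sq_nonneg D]
  refine ⟨8 * c * K, mul_nonneg (by linarith) (by linarith), fun F hF => ?_⟩
  obtain ⟨hf, hf', -, hsum⟩ := hF
  have habs := F.summable_abs_jump_sq_div hsum
  have hneg := F.tsum_negPart_jump_sq_div_le hx0 hx hc hD hβ (inv_pos.2 (by linarith))
    (inv_le_one_of_one_le₀ hK) hf hf' habs
  have hlow := F.integral_deriv_sq_sub_tsum_negPart_le habs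
  have hE : 0 ≤ ∫ t in Ioi (0 : ℝ), F.f' t ^ 2 :=
    setIntegral_nonneg measurableSet_Ioi fun _ _ => sq_nonneg _
  have hsmall : 8 * c * D ^ 2 * K⁻¹ ≤ 1 := by
    rw [← div_eq_mul_inv, div_le_one (by positivity)]; linarith
  have hE' : 2 * (4 * c * K⁻¹ * D ^ 2 * ∫ t in Ioi (0 : ℝ), F.f' t ^ 2)
      ≤ ∫ t in Ioi (0 : ℝ), F.f' t ^ 2 := by
    nlinarith [mul_le_mul_of_nonneg_right hsmall hE]
  rw [div_inv_eq_mul] at hneg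
  linarith

theorem neg_mul_gap_le_of_semibounded {x β : ℕ → ℝ} {C : ℝ} (hx0 : 0 ≤ x 0) (hx : StrictMono x)
    (hC : ∀ F : PW1 x, MemDom x (fun _ => 0) β F →
      formVal x (fun _ => 0) β F ≥ -C * ∫ t in Ioi (0 : ℝ), F.f t ^ 2)
    {a b : ℕ} (hab : a < b) :
    -C * (x b - x a) ≤ (if a = 0 then 0 else 1 / β a) + 1 / β b := by
  have h := hC _ (PW1.memDom_indicatorIoo hx hab β)
  rwa [PW1.formVal_indicatorIoo hx hab, PW1.integral_indicatorIoo_sq hx hx0 hab.le] at h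

theorem dminus_eq (x : ℕ → ℝ) (κ : ℕ → ℕ) (j : ℕ) :
    dminus x κ j = x (κ j) - x (kprev κ j) := by
  cases j <;> rfl

theorem inv_abs_le_dminus_of_semibounded {x β : ℕ → ℝ} {C : ℝ} (hx0 : 0 ≤ x 0) (hx : StrictMono x)
    (hC : ∀ F : PW1 x, MemDom x (fun _ => 0) β F →
      formVal x (fun _ => 0) β F ≥ -C * ∫ t in Ioi (0 : ℝ), F.f t ^ 2)
    {κ : ℕ → ℕ} (hκmono : StrictMono κ) (hκ1 : ∀ j, 1 ≤ κ j) (hκneg : ∀ j, β (κ j) < 0)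
    (j : ℕ) :
    1 / |β (κ j)| ≤ C * dminus x κ j ∧ 1 / |β (κ j)| ≤ C * dminus x κ (j + 1) := by
  have hlt : kprev κ j < κ j := by
    cases j with
    | zero => exact hκ1 0
    | succ j => exact hκmono j.lt_succ_self
  have hprev : (if kprev κ j = 0 then 0 else 1 / β (kprev κ j)) ≤ 0 := by
    split_ifs with h
    · rfl
    cases j with
    | zero => exact absurd rfl h
    | succ j => exact (one_div_neg.2 (hκneg j)).le
  have hleft := neg_mul_gap_le_of_semibounded hx0 hx hC hlt
  have hright := neg_mul_gap_le_of_semibounded hx0 hx hC (hκmono j.lt_succ_self)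
  rw [if_neg (Nat.one_le_iff_ne_zero.1 (hκ1 j))] at hright
  have hnext := one_div_neg.2 (hκneg (j + 1))
  rw [abs_of_neg (hκneg j), one_div_neg_eq_neg_one_div]
  refine ⟨?_, ?_⟩
  · rw [dminus_eq]; linarith
  · show _ ≤ C * (x (κ (j + 1)) - x (κ j)); linarith

theorem inv_abs_le_mul_gap_of_le_dminus {x β : ℕ → ℝ} {κ : ℕ → ℕ}
    (hκall : ∀ n, 1 ≤ n → β n < 0 → ∃ j, κ j = n) {C' C₂ : ℝ} (hC'0 : 0 ≤ C')
    (hC' : ∀ j, 1 / |β (κ j)| ≤ C' * min (dminus x κ j) (dminus x κ (j + 1))) (hC₂ : 0 ≤ C₂)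
    (hgeom : ∀ j, dminus x κ j ≤
      C₂ * min (x (kprev κ j + 1) - x (kprev κ j)) (x (κ j) - x (κ j - 1)))
    (k : ℕ) (hk : β (k + 1) < 0) :
    1 / |β (k + 1)| ≤ C' * C₂ * (x (k + 1) - x k) ∧
      1 / |β (k + 1)| ≤ C' * C₂ * (x (k + 2) - x (k + 1)) := by
  obtain ⟨j, hj⟩ := hκall (k + 1) (Nat.le_add_left 1 k) hk
  have hleft := (hgeom j).trans (mul_le_mul_of_nonneg_left (min_le_right _ _) hC₂)
  have hright := (hgeom (j + 1)).trans (mul_le_mul_of_nonneg_left (min_le_left _ _) hC₂)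
  have hw := hC' j
  simp only [kprev] at hright
  rw [hj, Nat.add_sub_cancel] at hleft
  rw [hj] at hright hw
  rw [mul_assoc, mul_assoc]
  exact ⟨hw.trans (mul_le_mul_of_nonneg_left ((min_le_left _ _).trans hleft) hC'0),
    hw.trans (mul_le_mul_of_nonneg_left ((min_le_right _ _).trans hright) hC'0)⟩

theorem stmt_7_general (x : ℕ → ℝ) (hx0 : x 0 = 0) (hmono : StrictMono x)
    (β : ℕ → ℝ)
    (κ : ℕ → ℕ) (hκmono : StrictMono κ) (hκ1 : ∀ j, 1 ≤ κ j)
    (hκneg : ∀ j, β (κ j) < 0)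
    (hκall : ∀ n, 1 ≤ n → β n < 0 → ∃ j, κ j = n)
    (D : ℝ) (hD : ∀ k, x (k + 1) - x k ≤ D)
    (C₂ : ℝ) (hC₂ : 0 < C₂)
    (hgeom : ∀ j, dminus x κ j ≤
      C₂ * min (x (kprev κ j + 1) - x (kprev κ j)) (x (κ j) - x (κ j - 1))) :
    (∃ C : ℝ, 0 ≤ C ∧ ∀ F : PW1 x, MemDom x (fun _ => 0) β F →
        formVal x (fun _ => 0) β F ≥ -C * ∫ t in Ioi (0 : ℝ), F.f t ^ 2) ↔
      (∃ C' : ℝ, 0 ≤ C' ∧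
        ∀ j, 1 / |β (κ j)| ≤ C' * min (dminus x κ j) (dminus x κ (j + 1))) := by
  constructor
  · rintro ⟨C, hC0, hC⟩
    refine ⟨C, hC0, fun j => ?_⟩
    obtain ⟨hleft, hright⟩ :=
      inv_abs_le_dminus_of_semibounded hx0.ge hmono hC hκmono hκ1 hκneg j
    rw [mul_min_of_nonneg _ _ hC0]
    exact le_min hleft hright
  · rintro ⟨C', hC'0, hC'⟩
    exact exists_formVal_ge_of_inv_abs_le_mul_gap hx0.ge hmono (mul_nonneg hC'0 hC₂.le) hD
      (inv_abs_le_mul_gap_of_le_dminus hκall hC'0 hC' hC₂.le hgeom)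

/-- **Corollary 2.12**: if `d^* < ∞` and
`d_j^- = d_{k_{j-1}+1} + ⋯ + d_{k_j} ≤ C₂ min(d_{k_{j-1}+1}, d_{k_j})` for all `j`,
then `t_{X,β}` is lower semibounded iff `1/|β_{k_j}| ≤ C' min(d_j^-, d_{j+1}^-)`
for all `j` and some `C' ≥ 0`. -/
theorem stmt_7 (x : ℕ → ℝ) (hx0 : x 0 = 0) (hmono : StrictMono x)
    (hxtop : Tendsto x atTop atTop)
    (β : ℕ → ℝ) (hβ : ∀ k, β (k + 1) ≠ 0)
    (κ : ℕ → ℕ) (hκmono : StrictMono κ) (hκ1 : ∀ j, 1 ≤ κ j)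
    (hκneg : ∀ j, β (κ j) < 0)
    (hκall : ∀ n, 1 ≤ n → β n < 0 → ∃ j, κ j = n)
    (D : ℝ) (hD : ∀ k, x (k + 1) - x k ≤ D)
    (C₂ : ℝ) (hC₂ : 0 < C₂)
    (hgeom : ∀ j, dminus x κ j ≤
      C₂ * min (x (kprev κ j + 1) - x (kprev κ j)) (x (κ j) - x (κ j - 1))) :
    (∃ C : ℝ, 0 ≤ C ∧ ∀ F : PW1 x, MemDom x (fun _ => 0) β F →
        formVal x (fun _ => 0) β F ≥ -C * ∫ t in Ioi (0 : ℝ), F.f t ^ 2) ↔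
      (∃ C' : ℝ, 0 ≤ C' ∧
        ∀ j, 1 / |β (κ j)| ≤ C' * min (dminus x κ j) (dminus x κ (j + 1))) :=
  stmt_7_general x hx0 hmono β κ hκmono hκ1 hκneg hκall D hD C₂ hC₂ hgeom

end
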